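/- Let X and Y be Hilbert spaces, T : X → Y a bounded linear operator with a least-squares projection approximation {(X_n, T_n)}. Then for every n and every y ∈ D(T†) the error identity T_n† y − T† y = T_n† T (I − P_{X_n}) T† y − (I − P_{X_n}) T† y holds (i.e., T_n† y − T† y = (T_n† T − I)(I − P_{X_n}) T† y). -/

import Mathlib

/-!
Write `x = T†y` and `P = P_{Xₙ}`. Both `Tₙ†y` and `P x + Tₙ†T (I - P) x` lie in `N(Tₙ)ᗮ`, the
summand `P x` because `⟪P x, v⟫ = ⟪x, P v⟫` and `P v ∈ N(T)` when `v ∈ N(Tₙ)`. Both have `Tₙ`-image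
`P_{T(Xₙ)} y`, since `T(Xₙ) ⊆ cl R(T)` gives `P_{T(Xₙ)} T x = P_{T(Xₙ)} P_{cl R(T)} y = P_{T(Xₙ)} y`.
As `Tₙ` is injective on `N(Tₙ)ᗮ`, they coincide, which is the error identity rearranged.
-/

open Filter Topology Metric Submodule ContinuousLinearMap

/-- Orthogonal projection onto a subspace `K` (as an operator `H →L[ℝ] H`),
defined whenever `K` admits orthogonal projections (e.g. `K` closed). -/
noncomputable def orthProj {H : Type*} [NormedAddCommGroup H] [InnerProductSpace ℝ H]
    (K : Submodule ℝ H) : H →L[ℝ] H :=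
  open scoped Classical in
  if h : HasOrthogonalProjection K then
    haveI := h
    K.subtypeL.comp (orthogonalProjection K)
  else 0

lemma orthProj_eq_starProjection {H : Type*} [NormedAddCommGroup H] [InnerProductSpace ℝ H]
    (K : Submodule ℝ H) [K.HasOrthogonalProjection] : orthProj K = K.starProjection := by
  rw [orthProj, dif_pos ‹_›]
  rfl

section LeastSquares

variable {𝕜 E F : Type*} [RCLike 𝕜] [NormedAddCommGroup E] [InnerProductSpace 𝕜 E]
  [NormedAddCommGroup F] [InnerProductSpace 𝕜 F]

lemma LinearMap.injOn_orthogonal_ker {G : Type*} [AddCommGroup G] [Module 𝕜 G]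
    (f : E →ₗ[𝕜] G) : Set.InjOn f (LinearMap.ker f)ᗮ := by
  intro u hu v hv h
  have hker : u - v ∈ LinearMap.ker f := by rw [LinearMap.mem_ker, map_sub, h, sub_self]
  have hbot : u - v ∈ LinearMap.ker f ⊓ (LinearMap.ker f)ᗮ := ⟨hker, sub_mem hu hv⟩
  rw [inf_orthogonal_eq_bot, Submodule.mem_bot, sub_eq_zero] at hbot
  exact hbot

variable (T : E →L[𝕜] F) (K : Submodule 𝕜 E) [K.HasOrthogonalProjection]

lemma starProjection_mem_orthogonal_ker_comp {x : E}
    (hx : x ∈ (LinearMap.ker (T : E →ₗ[𝕜] F))ᗮ) :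
    K.starProjection x ∈ (LinearMap.ker ((T ∘L K.starProjection : E →L[𝕜] F) : E →ₗ[𝕜] F))ᗮ := by
  intro v hv
  rw [← inner_starProjection_left_eq_right]
  exact hx _ hv

/-- For `R = cl R(T)`: if `x = T†y`, `u = (T P_K)†y` and `w = (T P_K)†(T (x - P_K x))`,
then `u = P_K x + w`. -/
theorem eq_starProjection_add_of_leastSquares (R : Submodule 𝕜 F) [R.HasOrthogonalProjection]
    [(K.map (T : E →ₗ[𝕜] F)).HasOrthogonalProjection] (hKR : K.map (T : E →ₗ[𝕜] F) ≤ R)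
    {y : F} {x u w : E} (hx : x ∈ (LinearMap.ker (T : E →ₗ[𝕜] F))ᗮ)
    (hTx : T x = R.starProjection y)
    (hu : u ∈ (LinearMap.ker ((T ∘L K.starProjection : E →L[𝕜] F) : E →ₗ[𝕜] F))ᗮ)
    (hTu : (T ∘L K.starProjection) u = (K.map (T : E →ₗ[𝕜] F)).starProjection y)
    (hw : w ∈ (LinearMap.ker ((T ∘L K.starProjection : E →L[𝕜] F) : E →ₗ[𝕜] F))ᗮ)
    (hTw : (T ∘L K.starProjection) w =
      (K.map (T : E →ₗ[𝕜] F)).starProjection (T (x - K.starProjection x))) :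
    u = K.starProjection x + w := by
  set Q := (K.map (T : E →ₗ[𝕜] F)).starProjection
  have hQTPx : Q (T (K.starProjection x)) = T (K.starProjection x) :=
    starProjection_eq_self_iff.2 (mem_map_of_mem (K.starProjection_apply_mem x))
  have hQR : Q (R.starProjection y) = Q y :=
    DFunLike.congr_fun (starProjection_comp_starProjection_of_le hKR) y
  refine LinearMap.injOn_orthogonal_ker _ hu
    (add_mem (starProjection_mem_orthogonal_ker_comp T K hx) hw) ?_
  simp only [ContinuousLinearMap.coe_coe, map_add, hTu, hTw]
  rw [map_sub, hTx, map_sub, hQR, hQTPx, comp_apply,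
    starProjection_eq_self_iff.2 (K.starProjection_apply_mem x)]
  abel

end LeastSquares

variable {X Y : Type*} [NormedAddCommGroup X] [InnerProductSpace ℝ X] [CompleteSpace X]
  [NormedAddCommGroup Y] [InnerProductSpace ℝ Y] [CompleteSpace Y]

theorem stmt7_general
    (T : X →L[ℝ] Y) (Xn : ℕ → Submodule ℝ X)
    (hfin : ∀ n, FiniteDimensional ℝ (Xn n))
    (Tn : ℕ → X →L[ℝ] Y) (hTn : ∀ n, Tn n = T.comp (orthProj (Xn n)))
    (Tdag : Y → X)
    (hTdag : ∀ y ∈ (LinearMap.range (T : X →ₗ[ℝ] Y) ⊔ (LinearMap.range (T : X →ₗ[ℝ] Y))ᗮ : Submodule ℝ Y),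
      Tdag y ∈ (LinearMap.ker (T : X →ₗ[ℝ] Y))ᗮ ∧
        T (Tdag y) = orthProj (LinearMap.range (T : X →ₗ[ℝ] Y)).topologicalClosure y)
    (Tdagn : ℕ → Y → X)
    (hTdagn : ∀ n (y : Y), Tdagn n y ∈ (LinearMap.ker (Tn n : X →ₗ[ℝ] Y))ᗮ ∧
      (Tn n) (Tdagn n y) = orthProj ((Xn n).map (T : X →ₗ[ℝ] Y)) y) :
    ∀ n, ∀ y ∈ (LinearMap.range (T : X →ₗ[ℝ] Y) ⊔ (LinearMap.range (T : X →ₗ[ℝ] Y))ᗮ : Submodule ℝ Y),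
      Tdagn n y - Tdag y =
        Tdagn n (T (Tdag y - orthProj (Xn n) (Tdag y))) -
          (Tdag y - orthProj (Xn n) (Tdag y)) := by
  intro n y hy
  have := hfin n
  obtain ⟨hx, hTx⟩ := hTdag y hy
  obtain ⟨hu, hTu⟩ := hTdagn n y
  obtain ⟨hw, hTw⟩ := hTdagn n (T (Tdag y - orthProj (Xn n) (Tdag y)))
  simp only [hTn, orthProj_eq_starProjection] at hTx hu hTu hw hTw ⊢
  have hTXn : (Xn n).map (T : X →ₗ[ℝ] Y) ≤ (LinearMap.range (T : X →ₗ[ℝ] Y)).topologicalClosure :=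
    LinearMap.map_le_range.trans (le_topologicalClosure _)
  rw [eq_starProjection_add_of_leastSquares T (Xn n) _ hTXn hx hTx hu hTu hw hTw]
  abel

/-- Error identity: `Tₙ†y − T†y = (Tₙ†T − I)(I − P_{Xₙ})T†y` on `D(T†)`. -/
theorem stmt7
    (T : X →L[ℝ] Y) (Xn : ℕ → Submodule ℝ X)
    (hfin : ∀ n, FiniteDimensional ℝ (Xn n))
    (hinf : ¬ FiniteDimensional ℝ X)
    (hproj : ∀ x : X, Tendsto (fun n => orthProj (Xn n) x) atTop (𝓝 x))
    (Tn : ℕ → X →L[ℝ] Y) (hTn : ∀ n, Tn n = T.comp (orthProj (Xn n)))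
    (Tdag : Y → X)
    (hTdag : ∀ y ∈ (LinearMap.range (T : X →ₗ[ℝ] Y) ⊔ (LinearMap.range (T : X →ₗ[ℝ] Y))ᗮ : Submodule ℝ Y),
      Tdag y ∈ (LinearMap.ker (T : X →ₗ[ℝ] Y))ᗮ ∧
        T (Tdag y) = orthProj (LinearMap.range (T : X →ₗ[ℝ] Y)).topologicalClosure y)
    (Tdagn : ℕ → Y → X)
    (hTdagn : ∀ n (y : Y), Tdagn n y ∈ (LinearMap.ker (Tn n : X →ₗ[ℝ] Y))ᗮ ∧
      (Tn n) (Tdagn n y) = orthProj ((Xn n).map (T : X →ₗ[ℝ] Y)) y) :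
    ∀ n, ∀ y ∈ (LinearMap.range (T : X →ₗ[ℝ] Y) ⊔ (LinearMap.range (T : X →ₗ[ℝ] Y))ᗮ : Submodule ℝ Y),
      Tdagn n y - Tdag y =
        Tdagn n (T (Tdag y - orthProj (Xn n) (Tdag y))) -
          (Tdag y - orthProj (Xn n) (Tdag y)) :=
  stmt7_general T Xn hfin Tn hTn Tdag hTdag Tdagn hTdagn
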